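/- arXiv:0905.1825 — 2 statements merged into one kernel-verified Lean document; each statement's English description precedes it below -/
import Mathlib

section
/- For every initial datum η ∈ H₊ and every control c ∈ L¹_loc([0,∞);ℝ₊), the delay state equation admits a unique solution x(·;η,c) : [-T,∞) → ℝ, and this solution is absolutely continuous on [0,∞). -/
open MeasureTheory Real Set Filter Topology

noncomputable section

/-- Lebesgue measure restricted to the interval `[-T,0]`. -/
def μT (T : ℝ) : Measure ℝ := volume.restrict (Icc (-T) 0)

/-- The space `H = ℝ × L²([-T,0];ℝ)`. -/
abbrev Hsp (T : ℝ) := ℝ × Lp ℝ 2 (μT T)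
/-- Hypotheses on the delay kernel `a`: it belongs to `W^{1,2}([-T,0];ℝ)`
(it has an a.e. derivative `a'` in `L²`), is nonnegative, and vanishes at `-T`. -/
structure AHyp (T : ℝ) (a : ℝ → ℝ) : Prop where
  mem : MemLp a 2 (μT T)
  w12 : ∃ a' : ℝ → ℝ, MemLp a' 2 (μT T) ∧
    ∀ s ∈ Icc (-T) (0:ℝ), a s = a (-T) + ∫ ξ in (-T)..s, a' ξ
  nonneg : ∀ s ∈ Icc (-T) (0:ℝ), 0 ≤ a s
  zeroT : a (-T) = 0

/-- Hypotheses on `f₀`: jointly concave, nondecreasing in the second variable,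
Lipschitz continuous with constant `Cf`, positive at `(0,y)` for `y > 0`, and
extended by `f₀(x,y) = f₀(0,y)` for `x < 0`. -/
structure FHyp (Cf : ℝ) (f₀ : ℝ × ℝ → ℝ) : Prop where
  conc : ConcaveOn ℝ univ f₀
  mono : ∀ x : ℝ, Monotone fun y => f₀ (x, y)
  lip : LipschitzWith (Real.toNNReal Cf) f₀
  pos : ∀ y : ℝ, 0 < y → 0 < f₀ (0, y)
  extneg : ∀ x : ℝ, x < 0 → ∀ y : ℝ, f₀ (x, y) = f₀ (0, y)
/-- A control: a locally integrable, a.e. nonnegative function on `[0,∞)`. -/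
def IsControl (c : ℝ → ℝ) : Prop :=
  (∀ᵐ t ∂(volume.restrict (Ici (0:ℝ))), 0 ≤ c t) ∧ LocallyIntegrableOn c (Ici 0)

/-- `x : ℝ → ℝ` solves the delay state equation with initial datum `(η₀, η₁)`
and control `c`: `x = η₁` a.e. on `[-T,0)` and for all `t ≥ 0`,
`x(t) = η₀ + ∫₀ᵗ [r x(s) + f₀(x(s), ∫_{-T}^0 a(ξ)x(s+ξ)dξ) - c(s)] ds`. -/
def IsSol (T r : ℝ) (a : ℝ → ℝ) (f₀ : ℝ × ℝ → ℝ) (η₀ : ℝ) (η₁ : Lp ℝ 2 (μT T))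
    (c : ℝ → ℝ) (x : ℝ → ℝ) : Prop :=
  (∀ᵐ s ∂(volume.restrict (Ico (-T) (0:ℝ))), x s = η₁ s) ∧
  ∀ t : ℝ, 0 ≤ t → x t = η₀ + ∫ s in (0:ℝ)..t,
      (r * x s + f₀ (x s, ∫ ξ in (-T)..(0:ℝ), a ξ * x (s + ξ)) - c s)
/-- `x` is absolutely continuous on `[0,∞)`: it is the primitive of a locally
integrable function there. -/
def IsACOn (x : ℝ → ℝ) : Prop :=
  ∃ g : ℝ → ℝ, LocallyIntegrableOn g (Ici 0) ∧
    ∀ t : ℝ, 0 ≤ t → x t = x 0 + ∫ s in (0:ℝ)..t, g s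

/-!
The right-hand side `F x = r x + f₀(x, ∫ a(ξ) x(· + ξ) dξ) - c`, with `x` continued by the history
`η₁` on negative times, is causal and Lipschitz for the supremum norm of `x` over the past: the
kernel `a ∈ W^{1,2}` is continuous, hence bounded by some `C`, and the constant is
`K = |r| + Lip(f₀) (1 + C T)`. For such an `F`, the `n`-th iterate of the Picard operator of
`x t = η₀ + ∫₀ᵗ F x` on `C([0, b])` is Lipschitz with constant `(K b)ⁿ / n!`, so some iterate is a
contraction and its fixed point is the unique solution on `[0, b]`. Uniqueness makes the solutions
on `[0, 1], [0, 2], …` compatible, and they glue to a global solution, which is absolutely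
continuous as a primitive of a locally integrable function.
-/

open scoped NNReal Nat

lemma locallyIntegrableOn_Ici_iff {f : ℝ → ℝ} {a : ℝ} :
    LocallyIntegrableOn f (Ici a) ↔ ∀ b, IntegrableOn f (Icc a b) := by
  refine ⟨fun h b => h.integrableOn_compact_subset Icc_subset_Ici_self isCompact_Icc,
    fun h => (locallyIntegrableOn_iff isClosed_Ici.isLocallyClosed).2 fun k hk hkc => ?_⟩
  obtain ⟨b, hb⟩ := hkc.bddAbove
  exact (h b).mono_set fun x hx => ⟨hk hx, hb hx⟩

lemma LipschitzWith.integrable_comp {α E F : Type*} [MeasurableSpace α] {μ : Measure α}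
    [IsFiniteMeasure μ] [NormedAddCommGroup E] [NormedAddCommGroup F] {L : ℝ≥0} {f : E → F}
    (hf : LipschitzWith L f) {g : α → E} (hg : Integrable g μ) :
    Integrable (fun x => f (g x)) μ := by
  have hf' : LipschitzWith L fun e => f e - f 0 := by
    simpa using hf.sub (LipschitzWith.const (f 0))
  have := memLp_one_iff_integrable.1 (hf'.comp_memLp (sub_self _) (memLp_one_iff_integrable.2 hg))
  refine (this.add (integrable_const (f 0))).congr (ae_of_all _ fun x => ?_)
  simp

lemma abs_intervalIntegral_sub_le_pow_div_factorial {f g : ℝ → ℝ} {t C K : ℝ} {n : ℕ} (ht : 0 ≤ t)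
    (hf : IntervalIntegrable f volume 0 t) (hg : IntervalIntegrable g volume 0 t)
    (hfg : ∀ s ∈ Icc 0 t, |f s - g s| ≤ K * (C * (K * s) ^ n / n !)) :
    |(∫ s in 0..t, f s) - ∫ s in 0..t, g s| ≤ C * (K * t) ^ (n + 1) / (n + 1)! := by
  calc |(∫ s in 0..t, f s) - ∫ s in 0..t, g s|
      = |∫ s in 0..t, (f s - g s)| := by rw [intervalIntegral.integral_sub hf hg]
    _ ≤ ∫ s in 0..t, |f s - g s| := intervalIntegral.abs_integral_le_integral_abs ht
    _ ≤ ∫ s in 0..t, K * (C * (K * s) ^ n / n !) :=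
        intervalIntegral.integral_mono_on ht (hf.sub hg).abs
          (Continuous.intervalIntegrable (by fun_prop) _ _) hfg
    _ = K ^ (n + 1) * C / n ! * ∫ s in 0..t, s ^ n := by
        rw [← intervalIntegral.integral_const_mul]; congr 1; ext s; ring
    _ = C * (K * t) ^ (n + 1) / (n + 1)! := by
        rw [integral_pow, Nat.factorial_succ]; push_cast; field_simp; ring

lemma continuousOn_primitive_of_integrableOn_Icc {f : ℝ → ℝ} {a b : ℝ} (hab : a ≤ b)
    (hf : IntegrableOn f (Icc a b)) : ContinuousOn (fun t => ∫ s in a..t, f s) (Icc a b) := by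
  rw [← uIcc_of_le hab] at hf ⊢
  exact intervalIntegral.continuousOn_primitive_interval hf

/-- Hypotheses on the right-hand side `F` of `u t = η₀ + ∫ s in 0..t, F u s` under which this
equation is uniquely solvable on `[0, ∞)`. -/
structure IsCausalLipschitz (F : (ℝ → ℝ) → ℝ → ℝ) (K : ℝ≥0) : Prop where
  eq_of_eqOn : ∀ ⦃u v : ℝ → ℝ⦄ ⦃s : ℝ⦄, 0 ≤ s → EqOn u v (Icc 0 s) → F u s = F v s
  integrableOn : ∀ ⦃u : ℝ → ℝ⦄ ⦃b : ℝ⦄, Measurable u → IntegrableOn u (Icc 0 b) →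
    IntegrableOn (F u) (Icc 0 b)
  abs_sub_le : ∀ ⦃u v : ℝ → ℝ⦄ ⦃s d : ℝ⦄, Measurable u → Measurable v →
    IntegrableOn u (Icc 0 s) → IntegrableOn v (Icc 0 s) → 0 ≤ s →
    (∀ τ ∈ Icc 0 s, |u τ - v τ| ≤ d) → |F u s - F v s| ≤ K * d

def SolvesOn (F : (ℝ → ℝ) → ℝ → ℝ) (η₀ b : ℝ) (u : ℝ → ℝ) : Prop :=
  IntegrableOn (F u) (Icc 0 b) ∧ ∀ t ∈ Icc 0 b, u t = η₀ + ∫ s in 0..t, F u s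

variable {F : (ℝ → ℝ) → ℝ → ℝ} {K : ℝ≥0} {η₀ b : ℝ} {u v : ℝ → ℝ}

namespace SolvesOn

lemma mono (hu : SolvesOn F η₀ b u) {b' : ℝ} (hb' : b' ≤ b) : SolvesOn F η₀ b' u :=
  ⟨hu.1.mono_set (Icc_subset_Icc_right hb'), fun t ht => hu.2 t ⟨ht.1, ht.2.trans hb'⟩⟩

lemma continuousOn (hu : SolvesOn F η₀ b u) : ContinuousOn u (Icc 0 b) := by
  rcases lt_or_ge b 0 with hb | hb
  · simp [Icc_eq_empty_of_lt hb]
  exact (continuousOn_const.add (continuousOn_primitive_of_integrableOn_Icc hb hu.1)).congr hu.2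

end SolvesOn

namespace IsCausalLipschitz

variable (hF : IsCausalLipschitz F K)
include hF

lemma eqOn_of_eqOn (h : EqOn u v (Icc 0 b)) : EqOn (F u) (F v) (Icc 0 b) :=
  fun _ hs => hF.eq_of_eqOn hs.1 (h.mono (Icc_subset_Icc_right hs.2))

lemma solvesOn_congr (hu : SolvesOn F η₀ b u) (h : EqOn u v (Icc 0 b)) : SolvesOn F η₀ b v := by
  refine ⟨hu.1.congr_fun (hF.eqOn_of_eqOn h) measurableSet_Icc, fun t ht => ?_⟩
  rw [← h ht, hu.2 t ht]
  congr 1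
  refine intervalIntegral.integral_congr fun _ hs => hF.eqOn_of_eqOn h ?_
  rw [uIcc_of_le ht.1] at hs
  exact ⟨hs.1, hs.2.trans ht.2⟩

lemma integrableOn_IccExtend (hb : 0 ≤ b) (u : C(Icc 0 b, ℝ)) :
    IntegrableOn (F (IccExtend hb u)) (Icc 0 b) :=
  have hu : Continuous (IccExtend hb u) := u.continuous.Icc_extend'
  hF.integrableOn hu.measurable hu.integrableOn_Icc

lemma intervalIntegrable_IccExtend (hb : 0 ≤ b) (u : C(Icc 0 b, ℝ)) {t : ℝ} (ht : t ∈ Icc 0 b) :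
    IntervalIntegrable (F (IccExtend hb u)) volume 0 t :=
  (intervalIntegrable_iff_integrableOn_Icc_of_le ht.1).2
    ((hF.integrableOn_IccExtend hb u).mono_set (Icc_subset_Icc_right ht.2))

def picard (hb : 0 ≤ b) (η₀ : ℝ) (u : C(Icc 0 b, ℝ)) : C(Icc 0 b, ℝ) where
  toFun t := η₀ + ∫ s in 0..t, F (IccExtend hb u) s
  continuous_toFun :=
    (continuousOn_const.add (continuousOn_primitive_of_integrableOn_Icc hb
      (hF.integrableOn_IccExtend hb u))).domRestrict

lemma picard_apply (hb : 0 ≤ b) (u : C(Icc 0 b, ℝ)) (t : Icc 0 b) :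
    (hF.picard hb η₀ u) t = η₀ + ∫ s in 0..t, F (IccExtend hb u) s := rfl

lemma abs_picard_iterate_sub_le (hb : 0 ≤ b) (n : ℕ) (u v : C(Icc 0 b, ℝ)) (t : Icc 0 b) :
    |((hF.picard hb η₀)^[n] u) t - ((hF.picard hb η₀)^[n] v) t| ≤
      dist u v * (K * t) ^ n / n ! := by
  induction n generalizing t with
  | zero => simpa [← Real.dist_eq] using ContinuousMap.dist_apply_le_dist (f := u) (g := v) t
  | succ n ih =>
    set U := IccExtend hb ((hF.picard hb η₀)^[n] u)
    set V := IccExtend hb ((hF.picard hb η₀)^[n] v)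
    have hU : Continuous U := ContinuousMap.continuous _ |>.Icc_extend'
    have hV : Continuous V := ContinuousMap.continuous _ |>.Icc_extend'
    simp only [Function.iterate_succ_apply', picard_apply, add_sub_add_left_eq_sub]
    refine abs_intervalIntegral_sub_le_pow_div_factorial t.2.1
      (hF.intervalIntegrable_IccExtend hb _ t.2) (hF.intervalIntegrable_IccExtend hb _ t.2)
      fun s hs => hF.abs_sub_le hU.measurable hV.measurable hU.integrableOn_Icc
        hV.integrableOn_Icc hs.1 fun τ hτ => ?_
    have hτb : τ ∈ Icc 0 b := ⟨hτ.1, hτ.2.trans (hs.2.trans t.2.2)⟩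
    rw [IccExtend_of_mem hb _ hτb, IccExtend_of_mem hb _ hτb]
    refine (ih ⟨τ, hτb⟩).trans ?_
    have := hτ.1
    gcongr
    exact hτ.2

lemma exists_contractingWith_picard_iterate (hb : 0 ≤ b) :
    ∃ n q, ContractingWith q (hF.picard hb η₀)^[n] := by
  obtain ⟨n, hn⟩ := ((FloorSemiring.tendsto_pow_div_factorial_atTop (K * b)).eventually_lt_const
    one_pos).exists
  refine ⟨n, _, Real.toNNReal_lt_one.2 hn, LipschitzWith.of_dist_le' fun u v => ?_⟩
  refine (ContinuousMap.dist_le (by positivity)).2 fun t => ?_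
  have := t.2.1
  calc dist _ _ ≤ dist u v * (K * t) ^ n / n ! := hF.abs_picard_iterate_sub_le hb n u v t
    _ ≤ dist u v * (K * b) ^ n / n ! := by gcongr; exact t.2.2
    _ = (K * b) ^ n / n ! * dist u v := by ring

lemma isFixedPt_picard_restrict (hb : 0 ≤ b) (hu : SolvesOn F η₀ b u) :
    Function.IsFixedPt (hF.picard hb η₀)
      ⟨(Icc 0 b).domRestrict u, hu.continuousOn.domRestrict⟩ := by
  have hext : SolvesOn F η₀ b (IccExtend hb ((Icc 0 b).domRestrict u)) :=
    hF.solvesOn_congr hu fun t ht => (IccExtend_of_mem hb ((Icc 0 b).domRestrict u) ht).symm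
  ext t
  exact (hext.2 t t.2).symm.trans (IccExtend_of_mem hb _ t.2)

theorem eqOn_of_solvesOn (hu : SolvesOn F η₀ b u) (hv : SolvesOn F η₀ b v) :
    EqOn u v (Icc 0 b) := by
  intro t ht
  have hb : 0 ≤ b := ht.1.trans ht.2
  obtain ⟨n, q, hq⟩ := hF.exists_contractingWith_picard_iterate hb (η₀ := η₀)
  have := hq.fixedPoint_unique' ((hF.isFixedPt_picard_restrict hb hu).iterate n)
    ((hF.isFixedPt_picard_restrict hb hv).iterate n)
  exact congr($this ⟨t, ht⟩)

theorem exists_solvesOn (hb : 0 ≤ b) : ∃ u, Continuous u ∧ SolvesOn F η₀ b u := by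
  obtain ⟨n, q, hq⟩ := hF.exists_contractingWith_picard_iterate hb (η₀ := η₀)
  set z := hq.fixedPoint _
  have hz : Function.IsFixedPt (hF.picard hb η₀) z := hq.isFixedPt_fixedPoint_iterate
  refine ⟨IccExtend hb z, z.continuous.Icc_extend', hF.integrableOn_IccExtend hb z,
    fun t ht => ?_⟩
  rw [IccExtend_of_mem hb z ht]
  exact (DFunLike.congr_fun hz ⟨t, ht⟩).symm

theorem exists_forall_solvesOn (η₀ : ℝ) : ∃ x, ∀ b, SolvesOn F η₀ b x := by
  choose u _ hu using fun n : ℕ => hF.exists_solvesOn (η₀ := η₀) n.cast_nonneg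
  have hx : ∀ n : ℕ, EqOn (fun t => u ⌈t⌉₊ t) (u n) (Icc 0 n) := fun n t ht =>
    hF.eqOn_of_solvesOn (hu _) ((hu n).mono (Nat.cast_le.2 (Nat.ceil_le.2 ht.2)))
      ⟨ht.1, Nat.le_ceil t⟩
  refine ⟨fun t => u ⌈t⌉₊ t, fun b => ?_⟩
  obtain ⟨n, hn⟩ := exists_nat_ge b
  exact (hF.solvesOn_congr (hu n) (hx n).symm).mono hn

/-- No integrability of `F y` is assumed. Past the supremum `t₀` of the times up to which `F y` is
integrable, the integral takes the junk value `0`, so `y = η₀` there, while before `t₀` it agrees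
with the solution on `[0, t₀ + 1]`. Hence `y` coincides on `[0, ∞)` with a bounded measurable
function, and `F y` is integrable beyond `t₀` after all. -/
theorem solvesOn_of_forall_eq {y : ℝ → ℝ} (hy : ∀ t, 0 ≤ t → y t = η₀ + ∫ s in 0..t, F y s)
    (b : ℝ) : SolvesOn F η₀ b y := by
  refine ⟨?_, fun t ht => hy t ht.1⟩
  by_contra hb
  set S := {t | IntegrableOn (F y) (Icc 0 t)}
  have hS : BddAbove S :=
    ⟨b, fun t ht => not_lt.1 fun hbt => hb (ht.mono_set (Icc_subset_Icc_right hbt.le))⟩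
  have h0 : (0 : ℝ) ∈ S := by simp [S]
  set t₀ := sSup S
  have ht₀ : 0 ≤ t₀ := le_csSup hS h0
  obtain ⟨u, hu_cont, hu⟩ := hF.exists_solvesOn (η₀ := η₀) (by linarith : 0 ≤ t₀ + 1)
  have hbelow : ∀ τ ∈ Ico 0 t₀, y τ = u τ := by
    intro τ hτ
    obtain ⟨t, htS, hτt⟩ := exists_lt_of_lt_csSup ⟨0, h0⟩ hτ.2
    exact hF.eqOn_of_solvesOn ⟨htS, fun t' ht' => hy t' ht'.1⟩
      (hu.mono ((le_csSup hS htS).trans (by linarith))) ⟨hτ.1, hτt.le⟩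
  have habove : ∀ τ, t₀ < τ → y τ = η₀ := by
    intro τ hτ
    have hτ0 : 0 ≤ τ := ht₀.trans hτ.le
    have hnot : ¬ IntervalIntegrable (F y) volume 0 τ := fun h => hτ.not_ge
      (le_csSup hS ((intervalIntegrable_iff_integrableOn_Icc_of_le hτ0).1 h))
    rw [hy τ hτ0, intervalIntegral.integral_undef hnot, add_zero]
  set w : ℝ → ℝ := fun τ => if τ < t₀ then u τ else if τ = t₀ then y t₀ else η₀
  have hyw : EqOn y w (Icc 0 (t₀ + 1)) := by
    intro τ hτ
    simp only [w]
    split_ifs with h₁ h₂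
    · exact hbelow τ ⟨hτ.1, h₁⟩
    · rw [h₂]
    · exact habove τ (lt_of_le_of_ne (not_lt.1 h₁) (Ne.symm h₂))
  have hw_meas : Measurable w :=
    hu_cont.measurable.ite measurableSet_Iio
      (measurable_const.ite (measurableSet_singleton t₀) measurable_const)
  have hw : IntegrableOn w (Icc 0 (t₀ + 1)) := by
    refine Integrable.mono' (g := fun τ => |u τ| + (|y t₀| + |η₀|))
      (hu_cont.abs.add continuous_const).integrableOn_Icc hw_meas.aestronglyMeasurable
      (ae_of_all _ fun τ => ?_)
    have := abs_nonneg (u τ)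
    have := abs_nonneg (y t₀)
    have := abs_nonneg η₀
    simp only [w, Real.norm_eq_abs]
    split_ifs <;> linarith
  have hS₁ : t₀ + 1 ∈ S :=
    (hF.integrableOn hw_meas hw).congr_fun (hF.eqOn_of_eqOn hyw).symm measurableSet_Icc
  linarith [le_csSup hS hS₁]

theorem exists_unique_solution (η₀ : ℝ) :
    ∃ x, (∀ b, SolvesOn F η₀ b x) ∧
      ∀ y, (∀ t, 0 ≤ t → y t = η₀ + ∫ s in 0..t, F y s) → EqOn y x (Ici 0) := by
  obtain ⟨x, hx⟩ := hF.exists_forall_solvesOn η₀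
  exact ⟨x, hx, fun y hy t ht =>
    hF.eqOn_of_solvesOn (hF.solvesOn_of_forall_eq hy t) (hx t) ⟨ht, le_rfl⟩⟩

end IsCausalLipschitz

instance isFiniteMeasure_μT (T : ℝ) : IsFiniteMeasure (μT T) := by
  unfold μT
  infer_instance

lemma AHyp.continuousOn {T : ℝ} {a : ℝ → ℝ} (ha : AHyp T a) (hT : 0 ≤ T) :
    ContinuousOn a (Icc (-T) 0) := by
  obtain ⟨a', ha', hprim⟩ := ha.w12
  exact (continuousOn_const.add (continuousOn_primitive_of_integrableOn_Icc (by linarith)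
    (ha'.integrable one_le_two))).congr hprim

def delayTerm (T : ℝ) (a x : ℝ → ℝ) (s : ℝ) : ℝ := ∫ ξ in (-T)..0, a ξ * x (s + ξ)

def delayRhs (T r : ℝ) (a : ℝ → ℝ) (f₀ : ℝ × ℝ → ℝ) (c x : ℝ → ℝ) (s : ℝ) : ℝ :=
  r * x s + f₀ (x s, delayTerm T a x s) - c s

def withHistory (η₁ u : ℝ → ℝ) : ℝ → ℝ := (Iio 0).piecewise η₁ u

section Delay

variable {T r C d s : ℝ} {L : ℝ≥0} {a c x y η₁ u : ℝ → ℝ} {f₀ : ℝ × ℝ → ℝ}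

lemma withHistory_of_neg (hs : s < 0) : withHistory η₁ u s = η₁ s :=
  piecewise_eq_of_mem _ _ _ hs

lemma withHistory_of_nonneg (hs : 0 ≤ s) : withHistory η₁ u s = u s :=
  piecewise_eq_of_notMem _ _ _ (not_lt.2 hs)

lemma integrableOn_withHistory {b : ℝ} (hη₁ : IntegrableOn η₁ (Icc (-T) 0))
    (hu : IntegrableOn u (Icc 0 b)) : IntegrableOn (withHistory η₁ u) (Icc (-T) b) := by
  have hneg : IntegrableOn (withHistory η₁ u) (Ico (-T) 0) :=
    (hη₁.mono_set Ico_subset_Icc_self).congr_fun (fun t ht => (withHistory_of_neg ht.2).symm)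
      measurableSet_Ico
  have hnonneg : IntegrableOn (withHistory η₁ u) (Icc 0 b) :=
    hu.congr_fun (fun t ht => (withHistory_of_nonneg ht.1).symm) measurableSet_Icc
  exact (hneg.union hnonneg).mono_set fun t ht =>
    (lt_or_ge t 0).imp (fun h => ⟨ht.1, h⟩) (fun h => ⟨h, ht.2⟩)

lemma intervalIntegrable_comp_add_left (hT : 0 ≤ T) (hx : IntegrableOn x (Icc (s - T) s)) :
    IntervalIntegrable (fun ξ => x (s + ξ)) volume (-T) 0 := by
  have := ((intervalIntegrable_iff_integrableOn_Icc_of_le (by linarith)).2 hx).comp_add_left s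
  simpa using this

lemma abs_delayTerm_le_of_abs_le (hT : 0 ≤ T) (ha : ∀ ξ ∈ Icc (-T) 0, ‖a ξ‖ ≤ C)
    (hx : ∀ τ ∈ Icc (s - T) s, |x τ| ≤ d) : |delayTerm T a x s| ≤ C * d * T := by
  have := intervalIntegral.norm_integral_le_of_norm_le_const (a := -T) (b := 0) (C := C * d)
    (f := fun ξ => a ξ * x (s + ξ)) fun ξ hξ => by
      rw [uIoc_of_le (by linarith)] at hξ
      rw [norm_mul]
      exact mul_le_mul (ha ξ (Ioc_subset_Icc_self hξ))
        (hx (s + ξ) ⟨by linarith [hξ.1], by linarith [hξ.2]⟩) (norm_nonneg _)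
        ((norm_nonneg _).trans (ha ξ (Ioc_subset_Icc_self hξ)))
  simpa [delayTerm, abs_of_nonneg hT] using this

lemma abs_delayTerm_le (hT : 0 ≤ T) (ha : ∀ ξ ∈ Icc (-T) 0, ‖a ξ‖ ≤ C)
    (hx : IntegrableOn x (Icc (s - T) s)) :
    |delayTerm T a x s| ≤ C * ∫ τ in Icc (s - T) s, |x τ| := by
  calc |delayTerm T a x s| ≤ ∫ ξ in (-T)..0, C * |x (s + ξ)| := by
        rw [← Real.norm_eq_abs, delayTerm]
        refine intervalIntegral.norm_integral_le_of_norm_le (by linarith)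
          (ae_of_all _ fun ξ hξ => ?_) ((intervalIntegrable_comp_add_left hT hx).abs.const_mul C)
        rw [norm_mul, Real.norm_eq_abs (x _)]
        exact mul_le_mul_of_nonneg_right (ha ξ (Ioc_subset_Icc_self hξ)) (abs_nonneg _)
    _ = C * ∫ τ in Icc (s - T) s, |x τ| := by
        rw [intervalIntegral.integral_const_mul,
          intervalIntegral.integral_comp_add_left (fun τ => |x τ|), add_zero, ← sub_eq_add_neg,
          intervalIntegral.integral_of_le (by linarith), integral_Icc_eq_integral_Ioc]

lemma aestronglyMeasurable_delayTerm (hT : 0 ≤ T) (ha : ContinuousOn a (Icc (-T) 0))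
    (hx : Measurable x) : AEStronglyMeasurable (delayTerm T a x) volume := by
  have ha' : AEStronglyMeasurable a (volume.restrict (Ioc (-T) 0)) :=
    (ha.aestronglyMeasurable measurableSet_Icc).mono_measure
      (Measure.restrict_mono Ioc_subset_Icc_self le_rfl)
  have h : AEStronglyMeasurable (fun p : ℝ × ℝ => a p.2 * x (p.1 + p.2))
      (volume.prod (volume.restrict (Ioc (-T) 0))) :=
    ha'.comp_snd.mul (hx.comp measurable_add).aestronglyMeasurable
  have hD : delayTerm T a x = fun s => ∫ ξ, a ξ * x (s + ξ) ∂(volume.restrict (Ioc (-T) 0)) := by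
    ext s
    exact intervalIntegral.integral_of_le (by linarith)
  rw [hD]
  exact h.integral_prod_right'

lemma delayTerm_congr_ae (hT : 0 ≤ T) (h : ∀ᵐ τ, τ ∈ Icc (s - T) s → x τ = y τ) :
    delayTerm T a x s = delayTerm T a y s := by
  refine intervalIntegral.integral_congr_ae ?_
  filter_upwards [(quasiMeasurePreserving_add_left volume s).ae h] with ξ hξ hmem
  rw [uIoc_of_le (by linarith)] at hmem
  rw [hξ ⟨by linarith [hmem.1], by linarith [hmem.2]⟩]

lemma delayRhs_congr_ae (hT : 0 ≤ T) (h : ∀ᵐ τ, τ ∈ Icc (s - T) s → x τ = y τ)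
    (hs : x s = y s) : delayRhs T r a f₀ c x s = delayRhs T r a f₀ c y s := by
  simp only [delayRhs, hs, delayTerm_congr_ae hT h]

lemma delayTerm_sub (hT : 0 ≤ T) (ha : ContinuousOn a (Icc (-T) 0))
    (hx : IntegrableOn x (Icc (s - T) s)) (hy : IntegrableOn y (Icc (s - T) s)) :
    delayTerm T a x s - delayTerm T a y s = delayTerm T a (x - y) s := by
  have hI : uIcc (-T) 0 = Icc (-T) 0 := uIcc_of_le (by linarith)
  rw [delayTerm, delayTerm, ← intervalIntegral.integral_sub
    ((intervalIntegrable_comp_add_left hT hx).continuousOn_mul (hI ▸ ha))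
    ((intervalIntegrable_comp_add_left hT hy).continuousOn_mul (hI ▸ ha))]
  simp only [delayTerm, Pi.sub_apply, mul_sub]

lemma integrableOn_delayRhs {b : ℝ} (hT : 0 ≤ T) (ha : ContinuousOn a (Icc (-T) 0))
    (hf : LipschitzWith L f₀) (hc : IntegrableOn c (Icc 0 b)) (hx : Measurable x)
    (hxi : IntegrableOn x (Icc (-T) b)) : IntegrableOn (delayRhs T r a f₀ c x) (Icc 0 b) := by
  obtain ⟨C, hC⟩ := isCompact_Icc.exists_bound_of_continuousOn ha
  have hC₀ : 0 ≤ C := (norm_nonneg _).trans (hC 0 ⟨by linarith, le_rfl⟩)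
  have hx₀ : IntegrableOn x (Icc 0 b) := hxi.mono_set (Icc_subset_Icc_left (by linarith))
  have hD : IntegrableOn (delayTerm T a x) (Icc 0 b) := by
    refine Measure.integrableOn_of_bounded (M := C * ∫ τ in Icc (-T) b, |x τ|)
      measure_Icc_lt_top.ne (aestronglyMeasurable_delayTerm hT ha hx)
      (ae_restrict_of_forall_mem measurableSet_Icc fun s hs => ?_)
    have hsub : Icc (s - T) s ⊆ Icc (-T) b := Icc_subset_Icc (by linarith [hs.1]) hs.2
    refine (abs_delayTerm_le hT hC (hxi.mono_set hsub)).trans ?_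
    exact mul_le_mul_of_nonneg_left
      (setIntegral_mono_set hxi.abs (ae_of_all _ fun _ => abs_nonneg _) hsub.eventuallyLE) hC₀
  exact ((hx₀.const_mul r).add (hf.integrable_comp (hx₀.prodMk hD))).sub hc

lemma abs_delayRhs_sub_le (hT : 0 ≤ T) (ha : ContinuousOn a (Icc (-T) 0))
    (hC : ∀ ξ ∈ Icc (-T) 0, ‖a ξ‖ ≤ C) (hf : LipschitzWith L f₀)
    (hx : IntegrableOn x (Icc (s - T) s)) (hy : IntegrableOn y (Icc (s - T) s))
    (hxy : ∀ τ ∈ Icc (s - T) s, |x τ - y τ| ≤ d) :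
    |delayRhs T r a f₀ c x s - delayRhs T r a f₀ c y s| ≤ (|r| + L * (1 + C * T)) * d := by
  have hC₀ : 0 ≤ C := (norm_nonneg _).trans (hC 0 ⟨by linarith, le_rfl⟩)
  have hs : |x s - y s| ≤ d := hxy s ⟨by linarith, le_rfl⟩
  have hd : 0 ≤ d := (abs_nonneg _).trans hs
  have hD : |delayTerm T a x s - delayTerm T a y s| ≤ C * d * T := by
    rw [delayTerm_sub hT ha hx hy]
    exact abs_delayTerm_le_of_abs_le hT hC hxy
  have hf₀ : dist (f₀ (x s, delayTerm T a x s)) (f₀ (y s, delayTerm T a y s)) ≤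
      L * (d + C * d * T) := by
    refine (hf.dist_le_mul _ _).trans ?_
    gcongr
    rw [Prod.dist_eq, Real.dist_eq, Real.dist_eq]
    exact max_le (by nlinarith [mul_nonneg (mul_nonneg hC₀ hd) hT])
      (by linarith)
  rw [Real.dist_eq] at hf₀
  calc |delayRhs T r a f₀ c x s - delayRhs T r a f₀ c y s|
      = |r * (x s - y s) + (f₀ (x s, delayTerm T a x s) - f₀ (y s, delayTerm T a y s))| := by
        simp only [delayRhs]; ring_nf
    _ ≤ |r| * d + L * (d + C * d * T) := by
        refine (abs_add_le _ _).trans (add_le_add ?_ hf₀)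
        rw [abs_mul]
        gcongr
    _ = (|r| + L * (1 + C * T)) * d := by ring

lemma delayRhs_withHistory (hT : 0 ≤ T) (hs : 0 ≤ s)
    (hy : ∀ᵐ τ ∂(volume.restrict (Ico (-T) 0)), y τ = η₁ τ) :
    delayRhs T r a f₀ c (withHistory η₁ y) s = delayRhs T r a f₀ c y s := by
  refine delayRhs_congr_ae hT ?_ (withHistory_of_nonneg hs)
  rw [ae_restrict_iff' measurableSet_Ico] at hy
  filter_upwards [hy] with τ hτ hmem
  rcases lt_or_ge τ 0 with h | h
  · rw [withHistory_of_neg h, hτ ⟨by linarith [hmem.1], h⟩]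
  · exact withHistory_of_nonneg h

theorem isCausalLipschitz_delayRhs (hT : 0 ≤ T) (ha : ContinuousOn a (Icc (-T) 0))
    (hf : LipschitzWith L f₀) (hc : LocallyIntegrableOn c (Ici 0)) (hη : Measurable η₁)
    (hη₁ : IntegrableOn η₁ (Icc (-T) 0)) :
    ∃ K, IsCausalLipschitz (fun u => delayRhs T r a f₀ c (withHistory η₁ u)) K := by
  obtain ⟨C, hC⟩ := isCompact_Icc.exists_bound_of_continuousOn ha
  refine ⟨Real.toNNReal (|r| + L * (1 + C * T)), fun u v s hs huv => ?_,
    fun u b hu hui => ?_, fun u v s d hu hv hui hvi hs huv => ?_⟩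
  · refine delayRhs_congr_ae hT (ae_of_all _ fun τ hτ => ?_)
      (by rw [withHistory_of_nonneg hs, withHistory_of_nonneg hs, huv ⟨hs, le_rfl⟩])
    rcases lt_or_ge τ 0 with h | h
    · rw [withHistory_of_neg h, withHistory_of_neg h]
    · rw [withHistory_of_nonneg h, withHistory_of_nonneg h, huv ⟨h, hτ.2⟩]
  · exact integrableOn_delayRhs hT ha hf (locallyIntegrableOn_Ici_iff.1 hc b)
      (hη.piecewise measurableSet_Iio hu) (integrableOn_withHistory hη₁ hui)
  · have hsub : Icc (s - T) s ⊆ Icc (-T) s := Icc_subset_Icc (by linarith) le_rfl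
    have hd : 0 ≤ d := (abs_nonneg _).trans (huv s ⟨hs, le_rfl⟩)
    refine (abs_delayRhs_sub_le hT ha hC hf ((integrableOn_withHistory hη₁ hui).mono_set hsub)
      ((integrableOn_withHistory hη₁ hvi).mono_set hsub) fun τ hτ => ?_).trans
      (mul_le_mul_of_nonneg_right (Real.le_coe_toNNReal _) hd)
    rcases lt_or_ge τ 0 with h | h
    · rw [withHistory_of_neg h, withHistory_of_neg h, sub_self, abs_zero]
      exact hd
    · rw [withHistory_of_nonneg h, withHistory_of_nonneg h]
      exact huv τ ⟨h, hτ.2⟩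

end Delay

theorem exists_unique_solution_delay_equation_general
    (T r Cf : ℝ) (hT : 0 < T)
    (a : ℝ → ℝ) (ha : AHyp T a)
    (f₀ : ℝ × ℝ → ℝ) (hf : FHyp Cf f₀)
    (η₀ : ℝ) (η₁ : Lp ℝ 2 (μT T))
    (c : ℝ → ℝ) (hc : IsControl c) :
    ∃ x : ℝ → ℝ, (IsSol T r a f₀ η₀ η₁ c x ∧ IsACOn x) ∧
      ∀ y : ℝ → ℝ, IsSol T r a f₀ η₀ η₁ c y → ∀ t : ℝ, 0 ≤ t → y t = x t := by
  obtain ⟨K, hF⟩ := isCausalLipschitz_delayRhs (r := r) hT.le (ha.continuousOn hT.le) hf.lip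
    hc.2 (Lp.stronglyMeasurable η₁).measurable ((Lp.memLp η₁).integrable one_le_two)
  obtain ⟨X, hX, hX_unique⟩ := hF.exists_unique_solution η₀
  set x := withHistory η₁ X
  have hx : ∀ t, 0 ≤ t → x t = η₀ + ∫ s in 0..t, delayRhs T r a f₀ c x s := fun t ht =>
    (withHistory_of_nonneg ht).trans ((hX t).2 t ⟨ht, le_rfl⟩)
  have hsol : IsSol T r a f₀ η₀ η₁ c x :=
    ⟨ae_restrict_of_forall_mem measurableSet_Ico fun s hs => withHistory_of_neg hs.2, hx⟩
  have hac : IsACOn x :=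
    ⟨_, locallyIntegrableOn_Ici_iff.2 fun b => (hX b).1, fun t ht => by simpa [hx 0] using hx t ht⟩
  refine ⟨x, ⟨hsol, hac⟩, fun y hy t ht => ?_⟩
  have hy' : ∀ t, 0 ≤ t → y t = η₀ + ∫ s in 0..t, delayRhs T r a f₀ c (withHistory η₁ y) s := by
    intro t ht
    rw [hy.2 t ht]
    congr 1
    refine intervalIntegral.integral_congr fun s hs => (delayRhs_withHistory hT.le ?_ hy.1).symm
    exact (uIcc_of_le ht ▸ hs).1
  exact (hX_unique y hy' ht).trans (withHistory_of_nonneg ht).symm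

/-- For every initial datum `η ∈ H₊` and every control
`c ∈ L¹_loc([0,∞);ℝ₊)`, the delay state equation admits a unique solution,
which is absolutely continuous on `[0,∞)`. -/
theorem exists_unique_solution_delay_equation
    (T r Cf : ℝ) (hT : 0 < T) (hr : 0 < r)
    (a : ℝ → ℝ) (ha : AHyp T a)
    (f₀ : ℝ × ℝ → ℝ) (hf : FHyp Cf f₀)
    (η₀ : ℝ) (hη₀ : 0 < η₀) (η₁ : Lp ℝ 2 (μT T))
    (c : ℝ → ℝ) (hc : IsControl c) :
    ∃ x : ℝ → ℝ, (IsSol T r a f₀ η₀ η₁ c x ∧ IsACOn x) ∧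
      ∀ y : ℝ → ℝ, IsSol T r a f₀ η₀ η₁ c y → ∀ t : ℝ, 0 ≤ t → y t = x t :=
  exists_unique_solution_delay_equation_general T r Cf hT a ha f₀ hf η₀ η₁ c hc
end
end

section
/- Characterization of the adjoint of A: an element η = (η₀,η₁) ∈ H belongs to D(A*) — i.e. the linear functional ζ ↦ ⟨Aζ, η⟩ is continuous on (D(A), ‖·‖) — if and only if η₁ ∈ W^{1,2}([-T,0];ℝ) and η₁(-T) = 0; in that case A*η = ( rη₀ + η₁(0), −η₁′ ), i.e. ⟨Aζ, η⟩ = ⟨ζ, (rη₀ + η₁(0), −η₁′)⟩ for all ζ ∈ D(A). -/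
open MeasureTheory Real Set Filter Topology

noncomputable section

/-- The inner product of `H = ℝ × L²([-T,0];ℝ)`. -/
def hinner (T : ℝ) (η ζ : Hsp T) : ℝ := η.1 * ζ.1 + ∫ s, η.2 s * ζ.2 s ∂(μT T)

/-- The (Hilbert) norm of `H = ℝ × L²([-T,0];ℝ)`. -/
def hnorm (T : ℝ) (η : Hsp T) : ℝ := Real.sqrt (η.1 ^ 2 + ‖η.2‖ ^ 2)

/-- The norm `‖η‖₋₁ = ‖A⁻¹η‖`, where `A⁻¹η = (η₀/r, s ↦ η₀/r - ∫_s^0 η₁(ξ)dξ)`. -/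
def nrm1 (T r : ℝ) (η : Hsp T) : ℝ :=
  Real.sqrt ((η.1 / r) ^ 2 + ∫ s, (η.1 / r - ∫ ξ in s..(0:ℝ), η.2 ξ) ^ 2 ∂(μT T))
/-- `(g, g')` is a `W^{1,2}` representative exhibiting membership `ζ ∈ D(A)`:
`g` represents `ζ₁`, has a.e. derivative `g' ∈ L²`, and `g(0) = ζ₀`. -/
structure DomARep (T : ℝ) (ζ : Hsp T) (g g' : ℝ → ℝ) : Prop where
  rep : ∀ᵐ s ∂(μT T), ζ.2 s = g s
  mem : MemLp g' 2 (μT T)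
  fund : ∀ s ∈ Icc (-T) (0:ℝ), g s = g (-T) + ∫ ξ in (-T)..s, g' ξ
  boundary : g 0 = ζ.1

/-- `(h, h')` is a `W^{1,2}` representative exhibiting membership `ζ ∈ D(A*)`:
`h` represents `ζ₁`, has a.e. derivative `h' ∈ L²`, and `h(-T) = 0`. -/
structure AstarRep (T : ℝ) (ζ : Hsp T) (h h' : ℝ → ℝ) : Prop where
  rep : ∀ᵐ s ∂(μT T), ζ.2 s = h s
  mem : MemLp h' 2 (μT T)
  fund : ∀ s ∈ Icc (-T) (0:ℝ), h s = h (-T) + ∫ ξ in (-T)..s, h' ξ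
  zeroT : h (-T) = 0

/-
Everything rests on integration by parts for primitives of integrable functions, proved by
Fubini on the triangle `{ξ ≤ s}`. It gives `⟨Aζ, η⟩ = ⟨ζ, (rη₀ + η₁(0), -η₁')⟩` whenever `η₁`
is `W^{1,2}` with `η₁(-T) = 0`, and hence the bound. Conversely, testing the bound on
`ζ = (0, VF)`, where `VF(s) = -∫_s^0 F` (`volterra`), gives `|⟨η₁, F⟩| ≤ C ‖VF‖`; Hahn–Banach
and Riesz then produce `w ∈ L²` with `⟨w, VF⟩ = ⟨η₁, F⟩` for all `F`, and integrating by parts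
once more identifies `η₁` with `s ↦ -∫_{-T}^s w`.
-/

def primitive (μ : Measure ℝ) (f : ℝ → ℝ) (s : ℝ) : ℝ := ∫ ξ in Iic s, f ξ ∂μ

section Primitive

variable {μ : Measure ℝ} {φ ψ : ℝ → ℝ}

lemma primitive_congr (h : φ =ᵐ[μ] ψ) : primitive μ φ = primitive μ ψ :=
  funext fun _ => integral_congr_ae (ae_restrict_of_ae h)

lemma primitive_add (hφ : Integrable φ μ) (hψ : Integrable ψ μ) :
    primitive μ (φ + ψ) = primitive μ φ + primitive μ ψ :=
  funext fun _ => integral_add hφ.integrableOn hψ.integrableOn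

lemma primitive_smul (c : ℝ) : primitive μ (c • φ) = c • primitive μ φ :=
  funext fun _ => integral_smul c φ

lemma norm_primitive_le (hφ : Integrable φ μ) (s : ℝ) :
    ‖primitive μ φ s‖ ≤ ∫ ξ, ‖φ ξ‖ ∂μ :=
  (norm_integral_le_integral_norm _).trans
    (setIntegral_le_integral hφ.norm (Eventually.of_forall fun _ => norm_nonneg _))

lemma integrable_indicator_Iic_mul_prod (hφ : Integrable φ μ) (hψ : Integrable ψ μ) :
    Integrable (fun p : ℝ × ℝ => (Iic p.1).indicator φ p.2 * ψ p.1) (μ.prod μ) := by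
  have hset : MeasurableSet {p : ℝ × ℝ | p.2 ≤ p.1} :=
    measurableSet_le measurable_snd measurable_fst
  refine ((hψ.mul_prod hφ).indicator hset).congr (Eventually.of_forall fun p => ?_)
  by_cases hp : p.2 ≤ p.1 <;> simp [indicator, hp, mul_comm]

lemma integral_indicator_Iic_mul (s : ℝ) :
    ∫ ξ, (Iic s).indicator φ ξ * ψ s ∂μ = primitive μ φ s * ψ s := by
  rw [integral_mul_const, integral_indicator measurableSet_Iic, primitive]

variable [SFinite μ]

lemma aestronglyMeasurable_primitive (hφ : Integrable φ μ) :
    AEStronglyMeasurable (primitive μ φ) μ := by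
  have hset : MeasurableSet {p : ℝ × ℝ | p.2 ≤ p.1} :=
    measurableSet_le measurable_snd measurable_fst
  have := ((hφ.aestronglyMeasurable.comp_snd (μ := μ)).indicator hset).integral_prod_right'
  refine this.congr (Eventually.of_forall fun s => ?_)
  simp only [primitive]
  rw [← integral_indicator measurableSet_Iic]
  rfl

lemma memLp_primitive [IsFiniteMeasure μ] (hφ : Integrable φ μ) (p : ENNReal) :
    MemLp (primitive μ φ) p μ :=
  MemLp.of_bound (aestronglyMeasurable_primitive hφ) _
    (Eventually.of_forall (norm_primitive_le hφ))

lemma integrable_primitive_mul (hφ : Integrable φ μ) (hψ : Integrable ψ μ) :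
    Integrable (fun s => primitive μ φ s * ψ s) μ :=
  (integrable_indicator_Iic_mul_prod hφ hψ).integral_prod_left.congr
    (Eventually.of_forall integral_indicator_Iic_mul)

theorem integral_primitive_mul_add_integral_mul_primitive [NullSingletonClass μ]
    (hφ : Integrable φ μ) (hψ : Integrable ψ μ) :
    ∫ s, primitive μ φ s * ψ s ∂μ + ∫ s, φ s * primitive μ ψ s ∂μ
      = (∫ s, φ s ∂μ) * ∫ s, ψ s ∂μ := by
  have hswap : ∫ s, primitive μ φ s * ψ s ∂μ
      = ∫ ξ, φ ξ * (∫ s, ψ s ∂μ - primitive μ ψ ξ) ∂μ := calc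
    _ = ∫ s, ∫ ξ, (Iic s).indicator φ ξ * ψ s ∂μ ∂μ := by
      simp only [integral_indicator_Iic_mul]
    _ = ∫ ξ, ∫ s, (Iic s).indicator φ ξ * ψ s ∂μ ∂μ :=
      integral_integral_swap (integrable_indicator_Iic_mul_prod hφ hψ)
    _ = ∫ ξ, φ ξ * ∫ s in Ici ξ, ψ s ∂μ ∂μ := by
      congr 1 with ξ
      rw [← integral_const_mul, ← integral_indicator measurableSet_Ici]
      congr 1 with s
      by_cases h : ξ ≤ s <;> simp [indicator, h]
    _ = _ := by
      congr 1 with ξ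
      rw [integral_Ici_eq_integral_Ioi, ← compl_Iic, setIntegral_compl measurableSet_Iic hψ,
        primitive]
  have hφΨ : Integrable (fun s => φ s * primitive μ ψ s) μ :=
    (integrable_primitive_mul hψ hφ).congr (Eventually.of_forall fun _ => mul_comm _ _)
  simp only [hswap, mul_sub]
  rw [integral_sub (hφ.mul_const _) hφΨ, integral_mul_const]
  ring

end Primitive

section Interval

variable {a b s : ℝ} {f : ℝ → ℝ}

lemma setIntegral_Icc_eq_intervalIntegral (hab : a ≤ b) :
    ∫ ξ in Icc a b, f ξ = ∫ ξ in a..b, f ξ := by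
  rw [integral_Icc_eq_integral_Ioc, intervalIntegral.integral_of_le hab]

lemma primitive_restrict_Icc (hs : s ∈ Icc a b) :
    primitive (volume.restrict (Icc a b)) f s = ∫ ξ in a..s, f ξ := by
  have hset : Iic s ∩ Icc a b = Icc a s := by
    ext
    simp only [mem_inter_iff, mem_Iic, mem_Icc]
    grind
  rw [primitive, Measure.restrict_restrict measurableSet_Iic, hset,
    setIntegral_Icc_eq_intervalIntegral hs.1]

theorem integral_deriv_mul_add_integral_mul_deriv (hab : a ≤ b) {u u' v v' : ℝ → ℝ}
    (hu' : IntegrableOn u' (Icc a b)) (hv' : IntegrableOn v' (Icc a b))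
    (hu : ∀ s ∈ Icc a b, u s = u a + ∫ ξ in a..s, u' ξ)
    (hv : ∀ s ∈ Icc a b, v s = v a + ∫ ξ in a..s, v' ξ) :
    (∫ s in Icc a b, u' s * v s) + ∫ s in Icc a b, u s * v' s = u b * v b - u a * v a := by
  set μ := volume.restrict (Icc a b)
  have hb : b ∈ Icc a b := right_mem_Icc.2 hab
  have hu_ae : ∀ᵐ s ∂μ, u s = u a + primitive μ u' s := by
    filter_upwards [ae_restrict_mem measurableSet_Icc] with s hs
    rw [hu s hs, primitive_restrict_Icc hs]
  have hv_ae : ∀ᵐ s ∂μ, v s = v a + primitive μ v' s := by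
    filter_upwards [ae_restrict_mem measurableSet_Icc] with s hs
    rw [hv s hs, primitive_restrict_Icc hs]
  have hub : u b = u a + ∫ s, u' s ∂μ := by
    rw [hu b hb, setIntegral_Icc_eq_intervalIntegral hab]
  have hvb : v b = v a + ∫ s, v' s ∂μ := by
    rw [hv b hb, setIntegral_Icc_eq_intervalIntegral hab]
  have hleft : ∫ s, u' s * v s ∂μ = v a * ∫ s, u' s ∂μ + ∫ s, u' s * primitive μ v' s ∂μ := by
    rw [integral_congr_ae (hv_ae.mono fun s hs => by rw [hs, mul_add]),
      integral_add (hu'.mul_const _) ((integrable_primitive_mul hv' hu').congr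
        (Eventually.of_forall fun _ => mul_comm _ _)), integral_mul_const, mul_comm]
  have hright : ∫ s, u s * v' s ∂μ = u a * ∫ s, v' s ∂μ + ∫ s, primitive μ u' s * v' s ∂μ := by
    rw [integral_congr_ae (hu_ae.mono fun s hs => by rw [hs, add_mul]),
      integral_add (hv'.const_mul _) (integrable_primitive_mul hu' hv'), integral_const_mul]
  have hparts := integral_primitive_mul_add_integral_mul_primitive hu' hv'
  rw [hleft, hright, hub, hvb]
  linear_combination hparts

end Interval

section Hilbert

variable {𝕜 E F : Type*} [RCLike 𝕜] [AddCommGroup E] [Module 𝕜 E]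
  [NormedAddCommGroup F] [InnerProductSpace 𝕜 F] [CompleteSpace F]

theorem exists_inner_map_eq_of_norm_le (B : E →ₗ[𝕜] F) (f : E →ₗ[𝕜] 𝕜) (C : ℝ)
    (hf : ∀ x, ‖f x‖ ≤ C * ‖B x‖) : ∃ w : F, ∀ x, inner 𝕜 w (B x) = f x := by
  have hker : LinearMap.ker B ≤ LinearMap.ker f := fun x hx => by
    rw [LinearMap.mem_ker] at hx ⊢
    simpa [hx] using hf x
  let ℓ : LinearMap.range B →ₗ[𝕜] 𝕜 :=
    ((LinearMap.ker B).liftQ f hker).comp B.quotKerEquivRange.symm.toLinearMap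
  have hℓ : ∀ x, ℓ ⟨B x, B.mem_range_self x⟩ = f x := fun x => by
    have : B.quotKerEquivRange.symm ⟨B x, B.mem_range_self x⟩ = Submodule.Quotient.mk x :=
      B.quotKerEquivRange.symm_apply_eq.2 (Subtype.ext (B.quotKerEquivRange_apply_mk x).symm)
    simp [ℓ, this]
  let ℓc := ℓ.mkContinuous C fun ⟨_, x, hx⟩ => by
    subst hx
    exact (hℓ x).symm ▸ hf x
  obtain ⟨g, hg, -⟩ := exists_extension_norm_eq (LinearMap.range B) ℓc
  refine ⟨(InnerProductSpace.toDual 𝕜 F).symm g, fun x => ?_⟩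
  rw [InnerProductSpace.toDual_symm_apply, hg ⟨B x, B.mem_range_self x⟩,
    LinearMap.mkContinuous_apply, hℓ]

end Hilbert

instance (T : ℝ) : IsFiniteMeasure (μT T) := by
  unfold μT
  infer_instance

lemma memLp_primitive_sub_integral {μ : Measure ℝ} [IsFiniteMeasure μ] {φ : ℝ → ℝ}
    (hφ : Integrable φ μ) :
    MemLp (fun s => primitive μ φ s - ∫ ξ, φ ξ ∂μ) 2 μ :=
  (memLp_primitive hφ 2).sub (memLp_const _)

def volterra (μ : Measure ℝ) [IsFiniteMeasure μ] : Lp ℝ 2 μ →ₗ[ℝ] Lp ℝ 2 μ where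
  toFun F := (memLp_primitive_sub_integral ((Lp.memLp F).integrable one_le_two)).toLp _
  map_add' F G := by
    have hF := (Lp.memLp F).integrable one_le_two
    have hG := (Lp.memLp G).integrable one_le_two
    rw [← MemLp.toLp_add]
    refine MemLp.toLp_congr _ _ (Eventually.of_forall fun s => ?_)
    rw [primitive_congr (Lp.coeFn_add F G), integral_congr_ae (Lp.coeFn_add F G),
      primitive_add hF hG, integral_add' hF hG]
    simp only [Pi.add_apply]
    ring
  map_smul' c F := by
    rw [RingHom.id_apply, ← MemLp.toLp_const_smul]
    refine MemLp.toLp_congr _ _ (Eventually.of_forall fun s => ?_)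
    rw [primitive_congr (Lp.coeFn_smul c F), integral_congr_ae (Lp.coeFn_smul c F),
      primitive_smul]
    simp only [Pi.smul_apply, smul_eq_mul, integral_const_mul]
    ring

lemma coeFn_volterra {μ : Measure ℝ} [IsFiniteMeasure μ] (F : Lp ℝ 2 μ) :
    volterra μ F =ᵐ[μ] fun s => primitive μ F s - ∫ ξ, F ξ ∂μ :=
  MemLp.coeFn_toLp (memLp_primitive_sub_integral ((Lp.memLp F).integrable one_le_two))

lemma L2.real_inner_eq_integral {α : Type*} [MeasurableSpace α] {μ : Measure α} (F G : Lp ℝ 2 μ) :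
    inner ℝ F G = ∫ s, F s * G s ∂μ := by
  rw [L2.inner_def]
  simp [mul_comm]

variable {T : ℝ} {f : ℝ → ℝ} {s : ℝ}

lemma abs_fst_le_hnorm (ζ : Hsp T) : |ζ.1| ≤ hnorm T ζ :=
  Real.abs_le_sqrt (le_add_of_nonneg_right (sq_nonneg _))

lemma norm_snd_le_hnorm (ζ : Hsp T) : ‖ζ.2‖ ≤ hnorm T ζ :=
  (le_abs_self _).trans (Real.abs_le_sqrt (le_add_of_nonneg_left (sq_nonneg _)))

lemma hnorm_zero_left (F : Lp ℝ 2 (μT T)) : hnorm T (0, F) = ‖F‖ := by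
  simp [hnorm, Real.sqrt_sq (norm_nonneg F)]

lemma primitive_μT (hs : s ∈ Icc (-T) 0) : primitive (μT T) f s = ∫ ξ in (-T)..s, f ξ :=
  primitive_restrict_Icc hs

lemma integral_μT (hT : 0 ≤ T) : ∫ ξ, f ξ ∂μT T = ∫ ξ in (-T)..0, f ξ :=
  setIntegral_Icc_eq_intervalIntegral (neg_nonpos.2 hT)

lemma domARep_volterra (hT : 0 ≤ T) (F : Lp ℝ 2 (μT T)) :
    DomARep T (0, volterra (μT T) F) (fun s => primitive (μT T) F s - ∫ ξ, F ξ ∂μT T) F where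
  rep := coeFn_volterra F
  mem := Lp.memLp F
  fund s hs := by
    rw [primitive_μT hs, primitive_μT (left_mem_Icc.2 (hs.1.trans hs.2)),
      intervalIntegral.integral_same]
    ring
  boundary := by
    rw [primitive_μT (right_mem_Icc.2 (neg_nonpos.2 hT)), integral_μT hT, sub_self]

lemma astarRep_neg_primitive (hT : 0 ≤ T) {w : Lp ℝ 2 (μT T)} {η : Hsp T}
    (hη : η.2 =ᵐ[μT T] -primitive (μT T) w) :
    AstarRep T η (-primitive (μT T) w) (-w) where
  rep := hη
  mem := (Lp.memLp w).neg
  fund s hs := by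
    simp only [Pi.neg_apply]
    rw [primitive_μT hs, primitive_μT (left_mem_Icc.2 (neg_nonpos.2 hT)),
      intervalIntegral.integral_same, intervalIntegral.integral_neg]
    ring
  zeroT := by
    rw [Pi.neg_apply, primitive_μT (left_mem_Icc.2 (neg_nonpos.2 hT)),
      intervalIntegral.integral_same, neg_zero]

theorem DomARep.integral_add_integral_eq (hT : 0 ≤ T) {ζ η : Hsp T} {g g' h h' : ℝ → ℝ}
    (hD : DomARep T ζ g g') (hA : AstarRep T η h h') :
    ∫ s, g' s * η.2 s ∂μT T + ∫ s, ζ.2 s * h' s ∂μT T = ζ.1 * h 0 := by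
  have hgreen := integral_deriv_mul_add_integral_mul_deriv (neg_nonpos.2 hT)
    (hD.mem.integrable one_le_two) (hA.mem.integrable one_le_two) hD.fund hA.fund
  rw [hD.boundary, hA.zeroT, mul_zero, sub_zero] at hgreen
  rw [← hgreen]
  congr 1 <;> refine integral_congr_ae ?_
  · filter_upwards [hA.rep] with s hs
    rw [hs]
  · filter_upwards [hD.rep] with s hs
    rw [hs]

lemma exists_bound_of_astarRep (hT : 0 ≤ T) (r : ℝ) {η : Hsp T} {h h' : ℝ → ℝ}
    (hA : AstarRep T η h h') :
    ∃ C : ℝ, ∀ (ζ : Hsp T) (g g' : ℝ → ℝ), DomARep T ζ g g' →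
      |r * ζ.1 * η.1 + ∫ s, g' s * η.2 s ∂(μT T)| ≤ C * hnorm T ζ := by
  set w := hA.mem.toLp h'
  refine ⟨|r * η.1 + h 0| + ‖w‖, fun ζ g g' hD => ?_⟩
  have hgreen := hD.integral_add_integral_eq hT hA
  have hw : ∫ s, ζ.2 s * h' s ∂μT T = inner ℝ ζ.2 w := by
    rw [L2.real_inner_eq_integral]
    refine integral_congr_ae ?_
    filter_upwards [hA.mem.coeFn_toLp] with s hs
    rw [hs]
  calc |r * ζ.1 * η.1 + ∫ s, g' s * η.2 s ∂(μT T)|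
      = |ζ.1 * (r * η.1 + h 0) - inner ℝ ζ.2 w| := by
        rw [← hw]
        congr 1
        linarith
    _ ≤ |ζ.1| * |r * η.1 + h 0| + ‖ζ.2‖ * ‖w‖ :=
        (abs_sub _ _).trans (add_le_add (abs_mul _ _).le (abs_real_inner_le_norm _ _))
    _ ≤ hnorm T ζ * |r * η.1 + h 0| + hnorm T ζ * ‖w‖ := by
        gcongr
        · exact abs_fst_le_hnorm ζ
        · exact norm_snd_le_hnorm ζ
    _ = (|r * η.1 + h 0| + ‖w‖) * hnorm T ζ := by ring

lemma exists_astarRep_of_bound (hT : 0 ≤ T) {r C : ℝ} {η : Hsp T}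
    (hC : ∀ (ζ : Hsp T) (g g' : ℝ → ℝ), DomARep T ζ g g' →
      |r * ζ.1 * η.1 + ∫ s, g' s * η.2 s ∂(μT T)| ≤ C * hnorm T ζ) :
    ∃ h h' : ℝ → ℝ, AstarRep T η h h' := by
  have hbound : ∀ F, ‖innerₛₗ ℝ η.2 F‖ ≤ C * ‖volterra (μT T) F‖ := fun F => by
    have := hC _ _ _ (domARep_volterra hT F)
    rwa [hnorm_zero_left, mul_zero, zero_mul, zero_add, ← L2.real_inner_eq_integral,
      real_inner_comm] at this
  obtain ⟨w, hw⟩ := exists_inner_map_eq_of_norm_le (volterra (μT T)) (innerₛₗ ℝ η.2) C hbound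
  have hmem : MemLp (-primitive (μT T) w) 2 (μT T) :=
    (memLp_primitive ((Lp.memLp w).integrable one_le_two) 2).neg
  have hη : η.2 = hmem.toLp _ := by
    refine ext_inner_left ℝ fun F => ?_
    have hgreen := (domARep_volterra hT F).integral_add_integral_eq hT
      (astarRep_neg_primitive hT (η := (0, hmem.toLp _)) hmem.coeFn_toLp)
    simp only [Pi.neg_apply, mul_neg, integral_neg, zero_mul] at hgreen
    calc inner ℝ F η.2 = inner ℝ w (volterra (μT T) F) := by
          rw [real_inner_comm, hw, innerₛₗ_apply_apply]
      _ = ∫ s, volterra (μT T) F s * w s ∂μT T := by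
          rw [L2.real_inner_eq_integral]
          simp only [mul_comm]
      _ = inner ℝ F (hmem.toLp _) := by
          rw [L2.real_inner_eq_integral]
          linarith
  exact ⟨_, _, astarRep_neg_primitive hT (by rw [hη]; exact hmem.coeFn_toLp)⟩

theorem adjoint_characterization_general
    (T r : ℝ) (hT : 0 < T) (η : Hsp T) :
    ((∃ C : ℝ, ∀ (ζ : Hsp T) (g g' : ℝ → ℝ), DomARep T ζ g g' →
        |r * ζ.1 * η.1 + ∫ s, g' s * η.2 s ∂(μT T)| ≤ C * hnorm T ζ)
      ↔ ∃ h h' : ℝ → ℝ, AstarRep T η h h') ∧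
    ∀ h h' : ℝ → ℝ, AstarRep T η h h' →
      ∀ (ζ : Hsp T) (g g' : ℝ → ℝ), DomARep T ζ g g' →
        r * ζ.1 * η.1 + ∫ s, g' s * η.2 s ∂(μT T)
          = ζ.1 * (r * η.1 + h 0) + ∫ s, ζ.2 s * (-(h' s)) ∂(μT T) := by
  refine ⟨⟨fun ⟨_, hC⟩ => exists_astarRep_of_bound hT.le hC,
    fun ⟨_, _, hA⟩ => exists_bound_of_astarRep hT.le r hA⟩, fun h h' hA ζ g g' hD => ?_⟩
  have hgreen := hD.integral_add_integral_eq hT.le hA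
  simp only [mul_neg, integral_neg]
  linarith

/-- Characterization of the adjoint of `A`: `η ∈ D(A*)`
(i.e. `ζ ↦ ⟨Aζ, η⟩` is continuous on `(D(A), ‖·‖)`) if and only if
`η₁ ∈ W^{1,2}([-T,0];ℝ)` with `η₁(-T) = 0`; in that case
`A*η = (rη₀ + η₁(0), -η₁')`, i.e. `⟨Aζ, η⟩ = ⟨ζ, (rη₀ + η₁(0), -η₁')⟩`
for all `ζ ∈ D(A)`. -/
theorem adjoint_characterization
    (T r : ℝ) (hT : 0 < T) (hr : 0 < r) (η : Hsp T) :
    ((∃ C : ℝ, ∀ (ζ : Hsp T) (g g' : ℝ → ℝ), DomARep T ζ g g' →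
        |r * ζ.1 * η.1 + ∫ s, g' s * η.2 s ∂(μT T)| ≤ C * hnorm T ζ)
      ↔ ∃ h h' : ℝ → ℝ, AstarRep T η h h') ∧
    ∀ h h' : ℝ → ℝ, AstarRep T η h h' →
      ∀ (ζ : Hsp T) (g g' : ℝ → ℝ), DomARep T ζ g g' →
        r * ζ.1 * η.1 + ∫ s, g' s * η.2 s ∂(μT T)
          = ζ.1 * (r * η.1 + h 0) + ∫ s, ζ.2 s * (-(h' s)) ∂(μT T) :=
  adjoint_characterization_general T r hT η
end
end
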